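/- For every integer n ≥ 2 and every r > 0, the function G_n(r) = r²·(P_1(r) − P_n(r)) is strictly increasing in r, and G_n(r) → 0 as r → 0⁺ while G_n(r) → n − 1 as r → ∞. -/

import Mathlib

/-!
Put `x = (r/2)^2`. Then `I_m(r) = (r/2)^m S_m(x)` for an entire series `S_m` with positive
coefficients, and by the Cauchy product and Vandermonde's identity `S_1 S_n` has the explicit
coefficients `c_j = (n+2j+1)! / (j! (j+1)! (n+j)! (n+j+1)!)`, while
`2x (S_2 S_n - S_1 S_{n+1})` has coefficients `w_j c_j` with `w_j = 2(n-1)j / (2j+n+1)`.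
Hence `G_n(r)` is the mean of `w` for the weights `c_j x^j`. The weights `w` increase strictly
from `w_0 = 0` to `n - 1`; a symmetrisation of the double series shows that such a mean is
strictly increasing in `x`, it tends to `w_0` as `x → 0`, and to `lim w_j` as `x → ∞` because
the mass of any finite set of weights tends to `0`.
-/

open Real Filter Set

/-- Modified Bessel function of the first kind of (integer) order `n`. -/
noncomputable def besselI (n : ℕ) (r : ℝ) : ℝ :=
  ∑' k : ℕ, (1 / (k.factorial * Real.Gamma (n + k + 1))) * (r / 2) ^ (n + 2 * k)

/-- `P n r = I_{n+1}(r) / (r * I_n(r))`. -/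
noncomputable def P (n : ℕ) (r : ℝ) : ℝ := besselI (n + 1) r / (r * besselI n r)

open Nat Finset Topology

noncomputable def seriesMean (t f : ℕ → ℝ) (x : ℝ) : ℝ :=
  (∑' j, t j * (f j * x ^ j)) / ∑' j, f j * x ^ j

section SeriesMean

variable {t f : ℕ → ℝ} {L : ℝ}

lemma summable_mul_of_nonneg_of_le {g : ℕ → ℝ} (hg : Summable g) (hg0 : 0 ≤ g)
    (ht0 : ∀ j, 0 ≤ t j) (htL : ∀ j, t j ≤ L) : Summable fun j => t j * g j :=
  (hg.mul_left L).of_nonneg_of_le (fun j => mul_nonneg (ht0 j) (hg0 j))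
    fun j => mul_le_mul_of_nonneg_right (htL j) (hg0 j)

lemma tsum_mul_pow_pos (hf : ∀ j, 0 < f j) {x : ℝ} (hx : 0 ≤ x)
    (hs : Summable fun j => f j * x ^ j) : 0 < ∑' j, f j * x ^ j :=
  hs.tsum_pos (fun j => mul_nonneg (hf j).le (pow_nonneg hx j)) 0 (by simpa using hf 0)

lemma mul_sub_mul_pow_nonneg (ht : Monotone t) {x y : ℝ} (hx : 0 ≤ x) (hxy : x ≤ y)
    (j k : ℕ) : 0 ≤ (t j - t k) * (y ^ j * x ^ k - x ^ j * y ^ k) := by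
  wlog hjk : j ≤ k generalizing j k
  · linarith [this k j (le_of_not_ge hjk)]
  obtain ⟨d, rfl⟩ := Nat.exists_eq_add_of_le hjk
  have hsplit : y ^ j * x ^ (j + d) - x ^ j * y ^ (j + d) = (x * y) ^ j * (x ^ d - y ^ d) := by
    ring
  rw [hsplit]
  exact mul_nonneg_of_nonpos_of_nonpos (sub_nonpos.2 (ht hjk))
    (mul_nonpos_of_nonneg_of_nonpos (pow_nonneg (mul_nonneg hx (hx.trans hxy)) j)
      (sub_nonpos.2 (pow_le_pow_left₀ hx hxy d)))

lemma tsum_mul_tsum_lt (hf : ∀ j, 0 < f j) (hs : ∀ x, 0 ≤ x → Summable fun j => f j * x ^ j)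
    (ht : StrictMono t) (ht0 : ∀ j, 0 ≤ t j) (htL : ∀ j, t j ≤ L) {x y : ℝ} (hx : 0 ≤ x)
    (hxy : x < y) :
    (∑' j, t j * (f j * x ^ j)) * ∑' j, f j * y ^ j
      < (∑' j, t j * (f j * y ^ j)) * ∑' j, f j * x ^ j := by
  have hy := hx.trans hxy.le
  have hu0 : ∀ z, 0 ≤ z → 0 ≤ fun j => f j * z ^ j := fun z hz j =>
    mul_nonneg (hf j).le (pow_nonneg hz j)
  have htu0 : ∀ z, 0 ≤ z → 0 ≤ fun j => t j * (f j * z ^ j) := fun z hz j =>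
    mul_nonneg (ht0 j) (hu0 z hz j)
  have htu : ∀ z, 0 ≤ z → Summable fun j => t j * (f j * z ^ j) := fun z hz =>
    summable_mul_of_nonneg_of_le (hs z hz) (hu0 z hz) ht0 htL
  have hxy' := (htu x hx).mul_of_nonneg (hs y hy) (htu0 x hx) (hu0 y hy)
  have hyx := (htu y hy).mul_of_nonneg (hs x hx) (htu0 y hy) (hu0 x hx)
  rw [Summable.tsum_mul_tsum (htu x hx) (hs y hy) hxy',
    Summable.tsum_mul_tsum (htu y hy) (hs x hx) hyx, ← sub_pos, ← hyx.tsum_sub hxy']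
  set D : ℕ × ℕ → ℝ := fun p => t p.1 * (f p.1 * y ^ p.1) * (f p.2 * x ^ p.2)
    - t p.1 * (f p.1 * x ^ p.1) * (f p.2 * y ^ p.2)
  have hD : Summable D := hyx.sub hxy'
  have hDs : Summable fun p : ℕ × ℕ => D p.swap := (Equiv.prodComm ℕ ℕ).summable_iff.2 hD
  have hswap : ∑' p : ℕ × ℕ, D p.swap = ∑' p, D p := (Equiv.prodComm ℕ ℕ).tsum_eq D
  -- Symmetrising in `(j, k)` pairs `t j` with `t k`, and each pair contributes a nonnegative term.
  have hDswap : ∀ p : ℕ × ℕ, D p + D p.swap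
      = f p.1 * f p.2 * ((t p.1 - t p.2) * (y ^ p.1 * x ^ p.2 - x ^ p.1 * y ^ p.2)) := by
    intro p
    simp only [D, Prod.fst_swap, Prod.snd_swap]
    ring
  have hpos : 0 < ∑' p, (D p + D p.swap) := by
    refine (hD.add hDs).tsum_pos (fun p => ?_) (1, 0) ?_
    · rw [hDswap]
      exact mul_nonneg (mul_pos (hf _) (hf _)).le
        (mul_sub_mul_pow_nonneg ht.monotone hx hxy.le _ _)
    · rw [hDswap]
      have h10 : t 0 < t 1 := ht zero_lt_one
      simp only [pow_one, pow_zero, mul_one]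
      exact mul_pos (mul_pos (hf _) (hf _)) (mul_pos (sub_pos.2 h10) (sub_pos.2 hxy))
  rw [hD.tsum_add hDs, hswap] at hpos
  linarith

lemma seriesMean_strictMonoOn (hf : ∀ j, 0 < f j)
    (hs : ∀ x, 0 ≤ x → Summable fun j => f j * x ^ j) (ht : StrictMono t) (ht0 : ∀ j, 0 ≤ t j)
    (htL : ∀ j, t j ≤ L) : StrictMonoOn (seriesMean t f) (Ici 0) := fun x hx y hy hxy =>
  (div_lt_div_iff₀ (tsum_mul_pow_pos hf hx (hs x hx)) (tsum_mul_pow_pos hf hy (hs y hy))).2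
    (tsum_mul_tsum_lt hf hs ht ht0 htL hx hxy)

lemma tendsto_tsum_mul_pow_nhds_zero {c : ℕ → ℝ} (hc : Summable fun j => ‖c j‖) :
    Tendsto (fun x => ∑' j, c j * x ^ j) (𝓝 0) (𝓝 (c 0)) := by
  have hc0 : ∑' j, c j * (0 : ℝ) ^ j = c 0 := by
    rw [tsum_eq_single 0 fun j hj => by simp [hj]]; simp
  rw [← hc0]
  refine tendsto_tsum_of_dominated_convergence hc (fun j => (by fun_prop : Continuous
    fun x : ℝ => c j * x ^ j).tendsto 0) ?_
  filter_upwards [Metric.closedBall_mem_nhds (0 : ℝ) one_pos] with x hx j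
  rw [norm_mul, norm_pow]
  exact mul_le_of_le_one_right (norm_nonneg _) (pow_le_one₀ (norm_nonneg _)
    (mem_closedBall_zero_iff.1 hx))

lemma tendsto_seriesMean_nhds_zero (hf : ∀ j, 0 < f j)
    (hs : ∀ x, 0 ≤ x → Summable fun j => f j * x ^ j) (ht0 : ∀ j, 0 ≤ t j)
    (htL : ∀ j, t j ≤ L) : Tendsto (seriesMean t f) (𝓝 0) (𝓝 (t 0)) := by
  have hf1 : Summable f := by simpa using hs 1 zero_le_one
  have htf1 : Summable fun j => t j * f j :=
    summable_mul_of_nonneg_of_le hf1 (fun j => (hf j).le) ht0 htL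
  have hA := tendsto_tsum_mul_pow_nhds_zero (htf1.congr fun j =>
    (Real.norm_of_nonneg (mul_nonneg (ht0 j) (hf j).le)).symm)
  have hB := tendsto_tsum_mul_pow_nhds_zero (hf1.congr fun j =>
    (Real.norm_of_nonneg (hf j).le).symm)
  have hlim := hA.div hB (hf 0).ne'
  rw [mul_div_cancel_right₀ _ (hf 0).ne'] at hlim
  refine hlim.congr fun x => ?_
  simp only [seriesMean, Pi.div_apply, mul_assoc]

lemma seriesMean_le (hf : ∀ j, 0 < f j) (hs : ∀ x, 0 ≤ x → Summable fun j => f j * x ^ j)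
    (ht0 : ∀ j, 0 ≤ t j) (htL : ∀ j, t j ≤ L) {x : ℝ} (hx : 0 ≤ x) : seriesMean t f x ≤ L := by
  have ha0 : 0 ≤ fun j => f j * x ^ j := fun j => mul_nonneg (hf j).le (pow_nonneg hx j)
  rw [seriesMean, div_le_iff₀ (tsum_mul_pow_pos hf hx (hs x hx)), ← tsum_mul_left]
  exact (summable_mul_of_nonneg_of_le (hs x hx) ha0 ht0 htL).tsum_le_tsum
    (fun j => mul_le_mul_of_nonneg_right (htL j) (ha0 j)) ((hs x hx).mul_left L)

lemma mul_one_sub_le_seriesMean (hf : ∀ j, 0 < f j)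
    (hs : ∀ x, 0 ≤ x → Summable fun j => f j * x ^ j) (ht : Monotone t) (ht0 : ∀ j, 0 ≤ t j)
    (htL : ∀ j, t j ≤ L) {x : ℝ} (hx : 0 ≤ x) (N : ℕ) :
    t N * (1 - (∑ j ∈ range N, f j * x ^ j) / ∑' j, f j * x ^ j) ≤ seriesMean t f x := by
  have ha0 : 0 ≤ fun j => f j * x ^ j := fun j => mul_nonneg (hf j).le (pow_nonneg hx j)
  have hta := summable_mul_of_nonneg_of_le (hs x hx) ha0 ht0 htL
  have hB := tsum_mul_pow_pos hf hx (hs x hx)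
  -- Only the first `N` terms can have `t j < t N`.
  have htail : ∑ j ∈ range N, (t j * (f j * x ^ j) - t N * (f j * x ^ j))
      ≤ ∑' j, (t j * (f j * x ^ j) - t N * (f j * x ^ j)) :=
    (hta.sub ((hs x hx).mul_left (t N))).sum_le_tsum _ fun j hj => by
      rw [← sub_mul]
      exact mul_nonneg (sub_nonneg.2 (ht (by simpa using hj))) (ha0 j)
  rw [Finset.sum_sub_distrib, hta.tsum_sub ((hs x hx).mul_left (t N)), tsum_mul_left,
    ← Finset.mul_sum] at htail
  have hhead : 0 ≤ ∑ j ∈ range N, t j * (f j * x ^ j) :=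
    Finset.sum_nonneg fun j _ => mul_nonneg (ht0 j) (ha0 j)
  have hexpand : t N * (1 - (∑ j ∈ range N, f j * x ^ j) / ∑' j, f j * x ^ j)
      * ∑' j, f j * x ^ j = t N * ∑' j, f j * x ^ j - t N * ∑ j ∈ range N, f j * x ^ j := by
    field_simp
  rw [seriesMean, le_div_iff₀ hB, hexpand]
  linarith

lemma tendsto_sum_range_div_tsum_atTop (hf : ∀ j, 0 < f j)
    (hs : ∀ x, 0 ≤ x → Summable fun j => f j * x ^ j) (N : ℕ) :
    Tendsto (fun x => (∑ j ∈ range N, f j * x ^ j) / ∑' j, f j * x ^ j) atTop (𝓝 0) := by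
  set C := ∑ j ∈ range N, f j
  have hC : 0 ≤ C := Finset.sum_nonneg fun j _ => (hf j).le
  have hbound : ∀ x : ℝ, 1 ≤ x →
      (∑ j ∈ range N, f j * x ^ j) / ∑' j, f j * x ^ j ≤ C / f N / x := by
    intro x hx
    have hx0 : 0 < x := one_pos.trans_le hx
    have hN : f N * x ^ N ≤ ∑' j, f j * x ^ j :=
      (hs x hx0.le).le_tsum N fun j _ => mul_nonneg (hf j).le (pow_nonneg hx0.le j)
    rw [div_le_div_iff₀ (tsum_mul_pow_pos hf hx0.le (hs x hx0.le)) hx0]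
    calc (∑ j ∈ range N, f j * x ^ j) * x = ∑ j ∈ range N, f j * x ^ (j + 1) := by
          rw [Finset.sum_mul]
          simp only [pow_succ, mul_assoc]
      _ ≤ C * x ^ N := by
          rw [Finset.sum_mul]
          exact Finset.sum_le_sum fun j hj =>
            mul_le_mul_of_nonneg_left (pow_le_pow_right₀ hx (Finset.mem_range.1 hj)) (hf j).le
      _ = C / f N * (f N * x ^ N) := by field_simp [(hf N).ne']
      _ ≤ C / f N * ∑' j, f j * x ^ j := mul_le_mul_of_nonneg_left hN (div_nonneg hC (hf N).le)
  refine tendsto_of_tendsto_of_tendsto_of_le_of_le' (h := fun x => C / f N / x)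
    tendsto_const_nhds (tendsto_const_nhds.div_atTop tendsto_id) ?_ ?_
  · filter_upwards [eventually_ge_atTop 0] with x hx
    exact div_nonneg (Finset.sum_nonneg fun j _ => mul_nonneg (hf j).le (pow_nonneg hx j))
      (tsum_nonneg fun j => mul_nonneg (hf j).le (pow_nonneg hx j))
  · filter_upwards [eventually_ge_atTop 1] with x hx
    exact hbound x hx

lemma tendsto_seriesMean_atTop (hf : ∀ j, 0 < f j)
    (hs : ∀ x, 0 ≤ x → Summable fun j => f j * x ^ j) (ht : Monotone t) (ht0 : ∀ j, 0 ≤ t j)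
    (htL : Tendsto t atTop (𝓝 L)) : Tendsto (seriesMean t f) atTop (𝓝 L) := by
  have hle : ∀ j, t j ≤ L := ht.ge_of_tendsto htL
  refine tendsto_order.2 ⟨fun a ha => ?_, fun a ha => ?_⟩
  · obtain ⟨N, hN⟩ := (htL.eventually (lt_mem_nhds ha)).exists
    have hlow : Tendsto (fun x => t N * (1 - (∑ j ∈ range N, f j * x ^ j) / ∑' j, f j * x ^ j))
        atTop (𝓝 (t N)) := by
      simpa using ((tendsto_sum_range_div_tsum_atTop hf hs N).const_sub 1).const_mul (t N)
    filter_upwards [hlow.eventually (lt_mem_nhds hN), eventually_ge_atTop 0] with x hx hx0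
    exact hx.trans_le (mul_one_sub_le_seriesMean hf hs ht ht0 hle hx0 N)
  · filter_upwards [eventually_ge_atTop 0] with x hx
    exact (seriesMean_le hf hs ht0 hle hx).trans_lt ha

end SeriesMean

noncomputable def besselCoeff (m k : ℕ) : ℝ := 1 / (k ! * (m + k)!)

lemma besselCoeff_pos (m k : ℕ) : 0 < besselCoeff m k := by
  unfold besselCoeff; positivity

noncomputable def besselSeries (m : ℕ) (x : ℝ) : ℝ := ∑' k, besselCoeff m k * x ^ k

lemma besselI_eq_mul_besselSeries (m : ℕ) (r : ℝ) :
    besselI m r = (r / 2) ^ m * besselSeries m ((r / 2) ^ 2) := by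
  rw [besselI, besselSeries, ← tsum_mul_left]
  congr 1 with k
  rw [besselCoeff, show (m : ℝ) + k + 1 = ((m + k : ℕ) : ℝ) + 1 by push_cast; ring,
    Real.Gamma_nat_eq_factorial, pow_add, pow_mul]
  ring

lemma summable_norm_besselCoeff_mul_pow (m : ℕ) (x : ℝ) :
    Summable fun k => ‖besselCoeff m k * x ^ k‖ := by
  refine (Real.summable_pow_div_factorial |x|).of_nonneg_of_le (fun k => norm_nonneg _)
    fun k => ?_
  rw [norm_mul, norm_pow, Real.norm_of_nonneg (besselCoeff_pos m k).le, Real.norm_eq_abs,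
    mul_comm, div_eq_mul_inv]
  gcongr
  rw [besselCoeff, one_div]
  exact inv_anti₀ (by positivity)
    (le_mul_of_one_le_right (by positivity) (Nat.one_le_cast.2 (m + k).factorial_pos))

lemma besselSeries_pos (m : ℕ) {x : ℝ} (hx : 0 ≤ x) : 0 < besselSeries m x :=
  tsum_mul_pow_pos (besselCoeff_pos m) hx (summable_norm_besselCoeff_mul_pow m x).of_norm

noncomputable def besselProdCoeff (μ ν j : ℕ) : ℝ :=
  (μ + ν + 2 * j)! / (j ! * (μ + j)! * (ν + j)! * (μ + ν + j)!)

lemma besselProdCoeff_pos (μ ν j : ℕ) : 0 < besselProdCoeff μ ν j := by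
  unfold besselProdCoeff; positivity

lemma sum_antidiagonal_choose_mul_choose (μ ν j : ℕ) :
    ∑ p ∈ antidiagonal j, j.choose p.1 * (μ + ν + j).choose (ν + p.2)
      = (μ + ν + 2 * j).choose (ν + j) := by
  rw [show μ + ν + 2 * j = j + (μ + ν + j) by ring, Nat.add_choose_eq,
    Finset.Nat.sum_antidiagonal_eq_sum_range_succ (fun a b => j.choose a * (μ + ν + j).choose b),
    Finset.Nat.sum_antidiagonal_eq_sum_range_succ
      (fun a b => j.choose a * (μ + ν + j).choose (ν + b)),
    show (ν + j).succ = j.succ + ν by omega, Finset.sum_range_add,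
    Finset.sum_eq_zero (s := range ν) fun k _ => by rw [Nat.choose_eq_zero_of_lt (by omega),
      zero_mul], add_zero]
  exact Finset.sum_congr rfl fun k hk => by
    rw [Finset.mem_range] at hk
    congr 2
    omega

lemma sum_antidiagonal_besselCoeff_mul (μ ν j : ℕ) :
    ∑ p ∈ antidiagonal j, besselCoeff μ p.1 * besselCoeff ν p.2 = besselProdCoeff μ ν j := by
  have hterm : ∀ p ∈ antidiagonal j, besselCoeff μ p.1 * besselCoeff ν p.2
      = (j.choose p.1 * (μ + ν + j).choose (ν + p.2) : ℕ) / (j ! * (μ + ν + j)! : ℝ) := by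
    rintro ⟨p, q⟩ hpq
    rw [HasAntidiagonal.mem_antidiagonal] at hpq
    subst hpq
    have h1 := Nat.add_choose_mul_factorial_mul_factorial q p
    have h2 := Nat.add_choose_mul_factorial_mul_factorial (μ + p) (ν + q)
    rw [add_comm q p] at h1
    rw [show μ + p + (ν + q) = μ + ν + (p + q) by ring] at h2
    rw [eq_div_iff (by positivity), ← h1, ← h2, besselCoeff, besselCoeff]
    push_cast
    field_simp
  have hM := Nat.add_choose_mul_factorial_mul_factorial (μ + j) (ν + j)
  rw [show μ + j + (ν + j) = μ + ν + 2 * j by ring] at hM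
  rw [Finset.sum_congr rfl hterm, ← Finset.sum_div, ← Nat.cast_sum,
    sum_antidiagonal_choose_mul_choose, besselProdCoeff, ← hM]
  push_cast
  field_simp

lemma hasSum_besselProdCoeff_mul_pow (μ ν : ℕ) (x : ℝ) :
    HasSum (fun j => besselProdCoeff μ ν j * x ^ j) (besselSeries μ x * besselSeries ν x) := by
  have hμ := summable_norm_besselCoeff_mul_pow μ x
  have hν := summable_norm_besselCoeff_mul_pow ν x
  have hterm : ∀ j,
      ∑ p ∈ antidiagonal j, besselCoeff μ p.1 * x ^ p.1 * (besselCoeff ν p.2 * x ^ p.2)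
        = besselProdCoeff μ ν j * x ^ j := fun j => by
    rw [← sum_antidiagonal_besselCoeff_mul, Finset.sum_mul]
    refine Finset.sum_congr rfl fun p hp => ?_
    rw [← HasAntidiagonal.mem_antidiagonal.1 hp, pow_add]
    ring
  have hsum := (summable_norm_sum_mul_antidiagonal_of_summable_norm hμ hν).of_norm
  rw [besselSeries, besselSeries, tsum_mul_tsum_eq_tsum_sum_antidiagonal_of_summable_norm hμ hν]
  simp only [hterm] at hsum ⊢
  exact hsum.hasSum

noncomputable def besselWeight (n j : ℕ) : ℝ := 2 * (n - 1) * j / (2 * j + n + 1)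

lemma besselWeight_zero (n : ℕ) : besselWeight n 0 = 0 := by
  simp [besselWeight]

lemma besselWeight_nonneg {n : ℕ} (hn : 1 ≤ n) (j : ℕ) : 0 ≤ besselWeight n j := by
  have : (0 : ℝ) ≤ n - 1 := sub_nonneg.2 (Nat.one_le_cast.2 hn)
  unfold besselWeight
  positivity

lemma besselWeight_strictMono {n : ℕ} (hn : 2 ≤ n) : StrictMono (besselWeight n) := by
  refine strictMono_nat_of_lt_succ fun j => ?_
  have : (2 : ℝ) ≤ n := by exact_mod_cast hn
  rw [besselWeight, besselWeight, div_lt_div_iff₀ (by positivity) (by positivity)]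
  push_cast
  nlinarith

lemma tendsto_besselWeight (n : ℕ) : Tendsto (besselWeight n) atTop (𝓝 ((n : ℝ) - 1)) := by
  have h := (tendsto_natCast_div_add_atTop (((n : ℝ) + 1) / 2)).const_mul ((n : ℝ) - 1)
  rw [mul_one] at h
  refine h.congr fun j => ?_
  rw [besselWeight]
  field_simp
  ring

lemma two_mul_besselProdCoeff_sub (n j : ℕ) :
    2 * (besselProdCoeff 2 n j - besselProdCoeff 1 (n + 1) j)
      = besselWeight n (j + 1) * besselProdCoeff 1 n (j + 1) := by
  -- Bring every factorial argument to the form `a + k` with `a ∈ {j, n + j, n + 2 * j}`, so that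
  -- `Nat.factorial_succ` expresses all of them through `j !`, `(n + j)!` and `(n + 2 * j)!`.
  rw [besselProdCoeff, besselProdCoeff, besselProdCoeff, besselWeight,
    show 2 + n + 2 * j = n + 2 * j + 2 by ring, show 1 + (n + 1) + 2 * j = n + 2 * j + 2 by ring,
    show 1 + n + 2 * (j + 1) = n + 2 * j + 3 by ring, show 2 + j = j + 2 by ring,
    show 1 + j = j + 1 by ring, show 1 + (j + 1) = j + 2 by ring,
    show 2 + n + j = n + j + 2 by ring, show 1 + (n + 1) + j = n + j + 2 by ring,
    show 1 + n + (j + 1) = n + j + 2 by ring, show n + 1 + j = n + j + 1 by ring,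
    show n + (j + 1) = n + j + 1 by ring]
  push_cast [Nat.factorial_succ]
  field_simp
  ring

lemma hasSum_besselWeight_mul (n : ℕ) (x : ℝ) :
    HasSum (fun j => besselWeight n j * (besselProdCoeff 1 n j * x ^ j))
      (2 * x * (besselSeries 2 x * besselSeries n x
        - besselSeries 1 x * besselSeries (n + 1) x)) := by
  rw [← hasSum_nat_add_iff' 1]
  simp only [Finset.range_one, Finset.sum_singleton, besselWeight_zero, zero_mul, sub_zero]
  have hcoeff : ∀ j, besselWeight n (j + 1) * (besselProdCoeff 1 n (j + 1) * x ^ (j + 1))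
      = 2 * x * (besselProdCoeff 2 n j * x ^ j - besselProdCoeff 1 (n + 1) j * x ^ j) :=
        fun j => by
    rw [← mul_assoc, ← two_mul_besselProdCoeff_sub]
    ring
  simp only [hcoeff]
  exact ((hasSum_besselProdCoeff_mul_pow 2 n x).sub
    (hasSum_besselProdCoeff_mul_pow 1 (n + 1) x)).mul_left (2 * x)

lemma P_eq_div_besselSeries (m : ℕ) {r : ℝ} (hr : r ≠ 0) :
    P m r = besselSeries (m + 1) ((r / 2) ^ 2) / (2 * besselSeries m ((r / 2) ^ 2)) := by
  have := besselSeries_pos m (sq_nonneg (r / 2))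
  rw [P, besselI_eq_mul_besselSeries, besselI_eq_mul_besselSeries]
  field_simp
  ring

lemma sq_mul_P_sub_P_eq_seriesMean (n : ℕ) {r : ℝ} (hr : r ≠ 0) :
    r ^ 2 * (P 1 r - P n r)
      = seriesMean (besselWeight n) (besselProdCoeff 1 n) ((r / 2) ^ 2) := by
  rw [P_eq_div_besselSeries 1 hr, P_eq_div_besselSeries n hr, seriesMean,
    (hasSum_besselWeight_mul n _).tsum_eq, (hasSum_besselProdCoeff_mul_pow 1 n _).tsum_eq,
    show r ^ 2 = 4 * (r / 2) ^ 2 by ring]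
  have h1 := besselSeries_pos 1 (sq_nonneg (r / 2))
  have hn := besselSeries_pos n (sq_nonneg (r / 2))
  generalize (r / 2) ^ 2 = x at h1 hn ⊢
  field_simp
  ring

theorem G_strictMono_and_limits (n : ℕ) (hn : 2 ≤ n) :
    StrictMonoOn (fun r : ℝ => r ^ 2 * (P 1 r - P n r)) (Set.Ioi 0) ∧
    Tendsto (fun r : ℝ => r ^ 2 * (P 1 r - P n r)) (nhdsWithin 0 (Set.Ioi 0)) (nhds 0) ∧
    Tendsto (fun r : ℝ => r ^ 2 * (P 1 r - P n r)) atTop (nhds ((n : ℝ) - 1)) := by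
  have hG : ∀ r : ℝ, 0 < r → seriesMean (besselWeight n) (besselProdCoeff 1 n) ((r / 2) ^ 2)
      = r ^ 2 * (P 1 r - P n r) := fun r hr => (sq_mul_P_sub_P_eq_seriesMean n hr.ne').symm
  have hf := besselProdCoeff_pos 1 n
  have hs : ∀ x : ℝ, 0 ≤ x → Summable fun j => besselProdCoeff 1 n j * x ^ j :=
    fun x _ => (hasSum_besselProdCoeff_mul_pow 1 n x).summable
  have hw := besselWeight_strictMono hn
  have hw0 := besselWeight_nonneg (by omega : 1 ≤ n)
  have hwL := hw.monotone.ge_of_tendsto (tendsto_besselWeight n)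
  refine ⟨?_, ?_, ?_⟩
  · have hsq : StrictMonoOn (fun r : ℝ => (r / 2) ^ 2) (Ioi 0) := fun r hr s _ hrs =>
      pow_lt_pow_left₀ (by linarith) (by linarith [mem_Ioi.1 hr]) two_ne_zero
    exact ((seriesMean_strictMonoOn hf hs hw hw0 hwL).comp hsq
      fun r _ => sq_nonneg (r / 2)).congr hG
  · have hsq : Tendsto (fun r : ℝ => (r / 2) ^ 2) (𝓝[>] 0) (𝓝 0) :=
      (((continuous_id.div_const 2).pow 2).tendsto' 0 0 (by norm_num)).mono_left
        nhdsWithin_le_nhds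
    have h := (tendsto_seriesMean_nhds_zero hf hs hw0 hwL).comp hsq
    rw [besselWeight_zero] at h
    exact h.congr' (eventually_nhdsWithin_of_forall hG)
  · have hsq : Tendsto (fun r : ℝ => (r / 2) ^ 2) atTop atTop :=
      (tendsto_pow_atTop two_ne_zero).comp (tendsto_id.atTop_div_const two_pos)
    exact ((tendsto_seriesMean_atTop hf hs hw.monotone hw0 (tendsto_besselWeight n)).comp
      hsq).congr' ((eventually_gt_atTop 0).mono hG)
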